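/- Let L be a Lindblad generator on M_d(ℂ) built from a Hermitian H and Kraus operators {h_α}, let L^T[X] = i[H,X] + Σ_α (h_α† X h_α − (1/2){h_α† h_α, X}) be its dual generator, and let G^T[X] = lim_{T→∞} (1/T)∫₀^T exp(tL^T)[X] dt be the dual time average. If there exists an invertible (full-rank) density matrix ρ* with L[ρ*] = 0, then G^T is a conditional expectation onto the fixed-point set: for all Y₁, Y₂ ∈ M_d(ℂ) with L^T[Y₁] = L^T[Y₂] = 0 and all X ∈ M_d(ℂ), G^T[Y₁ X Y₂] = Y₁ G^T[X] Y₂. -/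

import Mathlib

open Matrix Filter
open scoped ComplexOrder

attribute [local instance] Matrix.frobeniusNormedAddCommGroup Matrix.frobeniusNormedSpace

variable {d : ℕ}

/-- The Lindblad generator built from `H` and Kraus operators `h`. -/
noncomputable def lindbladOf (H : Matrix (Fin d) (Fin d) ℂ) {n : ℕ}
    (h : Fin n → Matrix (Fin d) (Fin d) ℂ) :
    Matrix (Fin d) (Fin d) ℂ →ₗ[ℂ] Matrix (Fin d) (Fin d) ℂ :=
  (-Complex.I) • (LinearMap.mulLeft ℂ H - LinearMap.mulRight ℂ H) +
    ∑ α, ((LinearMap.mulLeft ℂ (h α)).comp (LinearMap.mulRight ℂ (h α)ᴴ)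
      - ((1 : ℂ)/2) • (LinearMap.mulLeft ℂ ((h α)ᴴ * h α) + LinearMap.mulRight ℂ ((h α)ᴴ * h α)))

/-- The dual (Heisenberg picture) Lindblad generator built from `H` and Kraus operators `h`. -/
noncomputable def lindbladDualOf (H : Matrix (Fin d) (Fin d) ℂ) {n : ℕ}
    (h : Fin n → Matrix (Fin d) (Fin d) ℂ) :
    Matrix (Fin d) (Fin d) ℂ →ₗ[ℂ] Matrix (Fin d) (Fin d) ℂ :=
  Complex.I • (LinearMap.mulLeft ℂ H - LinearMap.mulRight ℂ H) +
    ∑ α, ((LinearMap.mulLeft ℂ (h α)ᴴ).comp (LinearMap.mulRight ℂ (h α))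
      - ((1 : ℂ)/2) • (LinearMap.mulLeft ℂ ((h α)ᴴ * h α) + LinearMap.mulRight ℂ ((h α)ᴴ * h α)))

/-- `exp (t L)` as a map on matrices. -/
noncomputable def expL (L : Matrix (Fin d) (Fin d) ℂ →ₗ[ℂ] Matrix (Fin d) (Fin d) ℂ) (t : ℝ) :
    Matrix (Fin d) (Fin d) ℂ →L[ℂ] Matrix (Fin d) (Fin d) ℂ :=
  haveI : IsTopologicalRing (Matrix (Fin d) (Fin d) ℂ →L[ℂ] Matrix (Fin d) (Fin d) ℂ) :=
    @NonUnitalSeminormedRing.toIsTopologicalRing _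
      (ContinuousLinearMap.toNormedRing (𝕜 := ℂ)
        (E := Matrix (Fin d) (Fin d) ℂ)).toSeminormedRing.toNonUnitalSeminormedRing
  NormedSpace.exp ((t : ℂ) • LinearMap.toContinuousLinearMap L)

/-!
Faithfulness of `ρ*` forces every fixed point `Y` of the dual generator to commute with `H` and
with all `h α`, `(h α)ᴴ`. Indeed `Yᴴ` is a fixed point too, and Lindblad's dissipation identity
`L^T[YᴴY] - L^T[Yᴴ] Y - Yᴴ L^T[Y] = ∑ α, [h α, Y]ᴴ [h α, Y]` then gives
`0 = tr (L[ρ*] YᴴY) = ∑ α, tr (ρ* [h α, Y]ᴴ [h α, Y])`, a sum of nonnegative terms that vanish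
only when `[h α, Y] = 0`; the Hamiltonian part of `L^T[Y] = 0` is what remains. Consequently
`X ↦ Y₁ X Y₂` commutes with `L^T`, hence with every `exp (t L^T)`, and, being continuous and
linear, with the time averages and their limit.
-/

namespace Matrix.PosDef

variable {𝕜 m n : Type*} [RCLike 𝕜] [Fintype m] [Fintype n] {ρ : Matrix n n 𝕜}

lemma trace_mul_conjTranspose_mul_self_nonneg (hρ : ρ.PosDef) (C : Matrix m n 𝕜) :
    0 ≤ (ρ * (Cᴴ * C)).trace := by
  rw [← Matrix.mul_assoc, trace_mul_cycle]
  exact (hρ.posSemidef.mul_mul_conjTranspose_same C).trace_nonneg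

lemma trace_mul_conjTranspose_mul_self_eq_zero_iff (hρ : ρ.PosDef) (C : Matrix m n 𝕜) :
    (ρ * (Cᴴ * C)).trace = 0 ↔ C = 0 := by
  refine ⟨fun h0 => ?_, fun hC => by simp [hC]⟩
  rw [← Matrix.mul_assoc, trace_mul_cycle,
    (hρ.posSemidef.mul_mul_conjTranspose_same C).trace_eq_zero_iff] at h0
  rw [← conjTranspose_eq_zero, ext_iff_mulVec]
  intro x
  rw [zero_mulVec]
  by_contra hx
  have hpos := hρ.dotProduct_mulVec_pos hx
  rw [star_mulVec, conjTranspose_conjTranspose, ← dotProduct_mulVec, mulVec_mulVec,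
    mulVec_mulVec, h0] at hpos
  simp at hpos

end Matrix.PosDef

section Lindblad

variable (H : Matrix (Fin d) (Fin d) ℂ) {n : ℕ} (h : Fin n → Matrix (Fin d) (Fin d) ℂ)

lemma lindbladOf_apply (X : Matrix (Fin d) (Fin d) ℂ) :
    lindbladOf H h X = (-Complex.I) • (H * X - X * H) +
      ∑ α, (h α * X * (h α)ᴴ - (1 / 2 : ℂ) • ((h α)ᴴ * h α * X + X * ((h α)ᴴ * h α))) := by
  simp [lindbladOf, LinearMap.sum_apply, Matrix.mul_assoc]

lemma lindbladDualOf_apply (X : Matrix (Fin d) (Fin d) ℂ) :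
    lindbladDualOf H h X = Complex.I • (H * X - X * H) +
      ∑ α, ((h α)ᴴ * X * h α - (1 / 2 : ℂ) • ((h α)ᴴ * h α * X + X * ((h α)ᴴ * h α))) := by
  simp [lindbladDualOf, LinearMap.sum_apply, Matrix.mul_assoc]

lemma trace_lindbladOf_mul (ρ X : Matrix (Fin d) (Fin d) ℂ) :
    (lindbladOf H h ρ * X).trace = (ρ * lindbladDualOf H h X).trace := by
  rw [lindbladOf_apply, lindbladDualOf_apply]
  simp only [add_mul, mul_add, sub_mul, mul_sub, Finset.sum_mul, Finset.mul_sum, smul_mul_assoc,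
    mul_smul_comm, trace_add, trace_sub, trace_smul, trace_sum, smul_eq_mul, Matrix.mul_assoc]
  congr 1
  · have e : (H * (ρ * X)).trace = (ρ * (X * H)).trace := by
      rw [trace_mul_comm, Matrix.mul_assoc]
    linear_combination (-Complex.I) * e
  · refine Finset.sum_congr rfl fun α _ => ?_
    have e₁ : (h α * (ρ * ((h α)ᴴ * X))).trace = (ρ * ((h α)ᴴ * (X * h α))).trace := by
      rw [trace_mul_comm, Matrix.mul_assoc, Matrix.mul_assoc]
    have e₂ : ((h α)ᴴ * (h α * (ρ * X))).trace = (ρ * (X * ((h α)ᴴ * h α))).trace := by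
      rw [← Matrix.mul_assoc, trace_mul_comm, Matrix.mul_assoc]
    linear_combination e₁ - (1 / 2 : ℂ) * e₂

variable {H} in
lemma conjTranspose_lindbladDualOf (hH : H.IsHermitian) (Y : Matrix (Fin d) (Fin d) ℂ) :
    (lindbladDualOf H h Y)ᴴ = lindbladDualOf H h Yᴴ := by
  rw [lindbladDualOf_apply, lindbladDualOf_apply]
  simp only [conjTranspose_add, conjTranspose_sub, conjTranspose_smul, conjTranspose_sum,
    conjTranspose_mul, conjTranspose_conjTranspose, hH.eq, Complex.star_def, Complex.conj_I,
    map_div₀, map_one, Complex.conj_ofNat, Matrix.mul_assoc]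
  congr 1
  · module
  · refine Finset.sum_congr rfl fun α _ => ?_
    module

variable {H} in
lemma lindbladDualOf_conjTranspose_eq_zero (hH : H.IsHermitian) {Y : Matrix (Fin d) (Fin d) ℂ}
    (hY : lindbladDualOf H h Y = 0) : lindbladDualOf H h Yᴴ = 0 := by
  rw [← conjTranspose_lindbladDualOf h hH, hY, conjTranspose_zero]

lemma lindbladDualOf_conjTranspose_mul_self (Y : Matrix (Fin d) (Fin d) ℂ) :
    lindbladDualOf H h (Yᴴ * Y) =
      lindbladDualOf H h Yᴴ * Y + Yᴴ * lindbladDualOf H h Y +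
        ∑ α, (h α * Y - Y * h α)ᴴ * (h α * Y - Y * h α) := by
  simp only [lindbladDualOf_apply, conjTranspose_sub, conjTranspose_mul, add_mul, mul_add,
    sub_mul, mul_sub, Finset.sum_mul, Finset.mul_sum, smul_mul_assoc, mul_smul_comm, smul_add, smul_sub,
    Matrix.mul_assoc]
  rw [← sub_eq_zero]
  abel_nf
  simp only [Finset.smul_sum]
  rw [← Finset.sum_add_distrib, ← Finset.sum_add_distrib, ← Finset.sum_add_distrib]
  refine Finset.sum_eq_zero fun α _ => ?_
  module

variable {H h}

lemma commute_kraus_of_lindbladDualOf_eq_zero (hH : H.IsHermitian) {ρ : Matrix (Fin d) (Fin d) ℂ}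
    (hρ : ρ.PosDef) (hstat : lindbladOf H h ρ = 0) {Y : Matrix (Fin d) (Fin d) ℂ}
    (hY : lindbladDualOf H h Y = 0) (α : Fin n) : Commute (h α) Y := by
  have hsum : ∑ α, (ρ * ((h α * Y - Y * h α)ᴴ * (h α * Y - Y * h α))).trace = 0 := by
    have hdiss := lindbladDualOf_conjTranspose_mul_self H h Y
    rw [hY, lindbladDualOf_conjTranspose_eq_zero h hH hY, zero_mul, mul_zero, add_zero, zero_add] at hdiss
    rw [← trace_sum, ← Finset.mul_sum, ← hdiss, ← trace_lindbladOf_mul, hstat, zero_mul,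
      trace_zero]
  rw [Finset.sum_eq_zero_iff_of_nonneg fun α _ =>
    hρ.trace_mul_conjTranspose_mul_self_nonneg _] at hsum
  exact sub_eq_zero.mp ((hρ.trace_mul_conjTranspose_mul_self_eq_zero_iff _).mp
    (hsum α (Finset.mem_univ α)))

lemma commute_of_lindbladDualOf_eq_zero (hH : H.IsHermitian) {ρ : Matrix (Fin d) (Fin d) ℂ}
    (hρ : ρ.PosDef) (hstat : lindbladOf H h ρ = 0) {Y : Matrix (Fin d) (Fin d) ℂ}
    (hY : lindbladDualOf H h Y = 0) :
    Commute H Y ∧ (∀ α, Commute (h α) Y) ∧ ∀ α, Commute (h α)ᴴ Y := by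
  have hh := commute_kraus_of_lindbladDualOf_eq_zero hH hρ hstat hY
  have hh' (α : Fin n) : Commute (h α)ᴴ Y := by
    simpa only [star_eq_conjTranspose, conjTranspose_conjTranspose] using
      (commute_kraus_of_lindbladDualOf_eq_zero hH hρ hstat
        (lindbladDualOf_conjTranspose_eq_zero h hH hY) α).star_star
  refine ⟨?_, hh, hh'⟩
  have hkraus : ∀ α, (h α)ᴴ * Y * h α
      - (1 / 2 : ℂ) • ((h α)ᴴ * h α * Y + Y * ((h α)ᴴ * h α)) = 0 := fun α => by
    rw [(hh' α).eq, Matrix.mul_assoc, ((hh' α).mul_left (hh α)).eq]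
    module
  rwa [lindbladDualOf_apply, Finset.sum_eq_zero fun α _ => hkraus α, add_zero,
    smul_eq_zero_iff_right Complex.I_ne_zero, sub_eq_zero] at hY

end Lindblad

section mulLeftRight

variable {R A : Type*} [CommSemiring R] [Semiring A] [Algebra R A]

lemma LinearMap.commute_mulLeft_mulLeftRight {a b c : A} (hab : Commute a b) :
    Commute (mulLeft R a) (mulLeftRight R (b, c)) :=
  LinearMap.ext fun x => by
    simp only [Module.End.mul_apply, mulLeft_apply, mulLeftRight_apply, ← mul_assoc, hab.eq]

lemma LinearMap.commute_mulRight_mulLeftRight {a b c : A} (hac : Commute a c) :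
    Commute (mulRight R a) (mulLeftRight R (b, c)) :=
  LinearMap.ext fun x => by
    simp only [Module.End.mul_apply, mulRight_apply, mulLeftRight_apply, mul_assoc, hac.eq]

end mulLeftRight

lemma commute_lindbladDualOf_mulLeftRight {H : Matrix (Fin d) (Fin d) ℂ} {n : ℕ}
    {h : Fin n → Matrix (Fin d) (Fin d) ℂ} {Y₁ Y₂ : Matrix (Fin d) (Fin d) ℂ}
    (hH₁ : Commute H Y₁) (hH₂ : Commute H Y₂)
    (hh₁ : ∀ α, Commute (h α) Y₁) (hh₂ : ∀ α, Commute (h α) Y₂)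
    (hh'₁ : ∀ α, Commute (h α)ᴴ Y₁) (hh'₂ : ∀ α, Commute (h α)ᴴ Y₂) :
    Commute (lindbladDualOf H h) (LinearMap.mulLeftRight ℂ (Y₁, Y₂)) := by
  have hL {a : Matrix (Fin d) (Fin d) ℂ} (ha : Commute a Y₁) :=
    LinearMap.commute_mulLeft_mulLeftRight (R := ℂ) (c := Y₂) ha
  have hR {a : Matrix (Fin d) (Fin d) ℂ} (ha : Commute a Y₂) :=
    LinearMap.commute_mulRight_mulLeftRight (R := ℂ) (b := Y₁) ha
  have hhh₁ α : Commute ((h α)ᴴ * h α) Y₁ := (hh'₁ α).mul_left (hh₁ α)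
  have hhh₂ α : Commute ((h α)ᴴ * h α) Y₂ := (hh'₂ α).mul_left (hh₂ α)
  refine (((hL hH₁).sub_left (hR hH₂)).smul_left _).add_left
    (Commute.sum_left _ _ _ fun α _ => ?_)
  exact ((hL (hh'₁ α)).mul_left (hR (hh₂ α))).sub_left
    (((hL (hhh₁ α)).add_left (hR (hhh₂ α))).smul_left _)

-- Instance search misses this: the operator norm comes from the Frobenius norm, whose topology
-- is not reducibly the product topology of `Matrix`. The term is the one used inside `expL`.
instance : IsTopologicalRing (Matrix (Fin d) (Fin d) ℂ →L[ℂ] Matrix (Fin d) (Fin d) ℂ) :=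
  @NonUnitalSeminormedRing.toIsTopologicalRing _
    (ContinuousLinearMap.toNormedRing (𝕜 := ℂ)
      (E := Matrix (Fin d) (Fin d) ℂ)).toSeminormedRing.toNonUnitalSeminormedRing

section Semigroup

variable {L Φ : Module.End ℂ (Matrix (Fin d) (Fin d) ℂ)}

lemma expL_apply_of_commute (hΦ : Commute L Φ) (t : ℝ) (X : Matrix (Fin d) (Fin d) ℂ) :
    expL L t (Φ X) = Φ (expL L t X) := by
  have hcomm : Commute ((t : ℂ) • LinearMap.toContinuousLinearMap L)
      (LinearMap.toContinuousLinearMap Φ) := ContinuousLinearMap.ext fun Y => by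
    change (t : ℂ) • L (Φ Y) = Φ ((t : ℂ) • L Y)
    rw [map_smul, ← Module.End.mul_apply, hΦ.eq, Module.End.mul_apply]
  exact DFunLike.congr_fun hcomm.exp_left.eq X

set_option synthInstance.maxHeartbeats 200000 in
lemma continuous_expL_apply (L : Module.End ℂ (Matrix (Fin d) (Fin d) ℂ))
    (X : Matrix (Fin d) (Fin d) ℂ) : Continuous fun t : ℝ => expL L t X :=
  ((differentiable_exp_smul_const ℂ _).continuous.comp
    Complex.continuous_ofReal).clm_apply continuous_const

lemma map_comm_of_tendsto_timeAverage (hΦ : Commute L Φ)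
    {G : Matrix (Fin d) (Fin d) ℂ → Matrix (Fin d) (Fin d) ℂ}
    (hG : ∀ X, Tendsto (fun T : ℝ => T⁻¹ • ∫ t in (0:ℝ)..T, expL L t X) atTop (nhds (G X)))
    (X : Matrix (Fin d) (Fin d) ℂ) : G (Φ X) = Φ (G X) := by
  let M := LinearMap.toContinuousLinearMap Φ
  have havg (T : ℝ) : T⁻¹ • ∫ t in (0:ℝ)..T, expL L t (Φ X) =
      M (T⁻¹ • ∫ t in (0:ℝ)..T, expL L t X) := by
    rw [M.map_smul_of_tower]
    simp_rw [expL_apply_of_commute hΦ]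
    exact congrArg _ (M.intervalIntegral_comp_comm
      ((continuous_expL_apply L X).intervalIntegrable 0 T))
  refine tendsto_nhds_unique (hG (Φ X)) ?_
  simp_rw [havg]
  exact (M.continuous.tendsto _).comp (hG X)

end Semigroup

theorem stmt3_general (d : ℕ)
    (H : Matrix (Fin d) (Fin d) ℂ) (hH : H.IsHermitian)
    {n : ℕ} (h : Fin n → Matrix (Fin d) (Fin d) ℂ)
    (GT : Matrix (Fin d) (Fin d) ℂ →ₗ[ℂ] Matrix (Fin d) (Fin d) ℂ)
    (hGT : ∀ X, Tendsto (fun T : ℝ => T⁻¹ • ∫ t in (0:ℝ)..T, expL (lindbladDualOf H h) t X)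
      atTop (nhds (GT X)))
    (hρ : ∃ ρstar : Matrix (Fin d) (Fin d) ℂ,
      ρstar.PosDef ∧ ρstar.trace = 1 ∧ lindbladOf H h ρstar = 0) :
    ∀ Y₁ Y₂ X : Matrix (Fin d) (Fin d) ℂ,
      lindbladDualOf H h Y₁ = 0 → lindbladDualOf H h Y₂ = 0 →
      GT (Y₁ * X * Y₂) = Y₁ * GT X * Y₂ := by
  obtain ⟨ρ, hρ, -, hstat⟩ := hρ
  intro Y₁ Y₂ X hY₁ hY₂
  obtain ⟨hH₁, hh₁, hh'₁⟩ := commute_of_lindbladDualOf_eq_zero hH hρ hstat hY₁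
  obtain ⟨hH₂, hh₂, hh'₂⟩ := commute_of_lindbladDualOf_eq_zero hH hρ hstat hY₂
  exact map_comm_of_tendsto_timeAverage
    (commute_lindbladDualOf_mulLeftRight hH₁ hH₂ hh₁ hh₂ hh'₁ hh'₂) hGT X

theorem stmt3 (d : ℕ) (hd : 1 ≤ d)
    (H : Matrix (Fin d) (Fin d) ℂ) (hH : H.IsHermitian)
    {n : ℕ} (h : Fin n → Matrix (Fin d) (Fin d) ℂ)
    (GT : Matrix (Fin d) (Fin d) ℂ →ₗ[ℂ] Matrix (Fin d) (Fin d) ℂ)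
    (hGT : ∀ X, Tendsto (fun T : ℝ => T⁻¹ • ∫ t in (0:ℝ)..T, expL (lindbladDualOf H h) t X)
      atTop (nhds (GT X)))
    (hρ : ∃ ρstar : Matrix (Fin d) (Fin d) ℂ,
      ρstar.PosDef ∧ ρstar.trace = 1 ∧ lindbladOf H h ρstar = 0) :
    ∀ Y₁ Y₂ X : Matrix (Fin d) (Fin d) ℂ,
      lindbladDualOf H h Y₁ = 0 → lindbladDualOf H h Y₂ = 0 →
      GT (Y₁ * X * Y₂) = Y₁ * GT X * Y₂ :=
  stmt3_general d H hH h GT hGT hρ
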